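/- Call an order-influencing set U for X minimal if no proper subset of U is an order-influencing set for X. Then any two minimal order-influencing sets for X under the same parameterization θ are equal (Theorem 1 of the paper, instantiated to the ordinal summary function with last-occurrence masking). -/
import Mathlib

lemma filter_dedup' {L : Type*} [DecidableEq L] (l : List L) (p : L → Bool) :
    l.dedup.filter p = (l.filter p).dedup := by
  induction l with
  | nil => simp
  | cons a l ih =>
    by_cases ha : a ∈ l
    · rw [List.dedup_cons_of_mem ha]
      by_cases hp : p a
      · rw [List.filter_cons_of_pos hp, List.dedup_cons_of_mem (List.mem_filter.mpr ⟨ha, hp⟩), ih]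
      · rw [List.filter_cons_of_neg (by simpa using hp), ih]
    · rw [List.dedup_cons_of_notMem ha]
      by_cases hp : p a
      · rw [List.filter_cons_of_pos hp, List.filter_cons_of_pos hp,
          List.dedup_cons_of_notMem (fun hmem => ha (List.mem_of_mem_filter hmem)), ih]
      · rw [List.filter_cons_of_neg (by simpa using hp),
          List.filter_cons_of_neg (by simpa using hp), ih]

open Classical in
/-- θ̃_X(h): the sum of θ h x over labels x in X. -/
noncomputable def thetaSum {L : Type*} [Fintype L] (θ : List L → L → ℝ)
    (X : Set L) (h : List L) : ℝ :=
  ∑ x ∈ Finset.univ.filter (· ∈ X), θ h x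

open Classical in
/-- The order summary of history h w.r.t. label set U: the list of distinct
labels of U occurring in h, arranged in the order of their last occurrences. -/
noncomputable def orderSummary {L : Type*} [DecidableEq L] (U : Set L)
    (h : List L) : List L :=
  ((h.filter (fun x => decide (x ∈ U))).reverse.dedup).reverse

/-- U is an order-influencing set for X under θ. -/
def OrderInfluencing {L : Type*} [Fintype L] [DecidableEq L]
    (θ : List L → L → ℝ) (X U : Set L) : Prop :=
  ∀ h h' : List L, orderSummary U h = orderSummary U h' →
    thetaSum θ X h = thetaSum θ X h'

open Classical

lemma orderSummary_nodup {L : Type*} [DecidableEq L] (U : Set L) (h : List L) :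
    (orderSummary U h).Nodup := by
  unfold orderSummary
  exact List.nodup_reverse.mpr (List.nodup_dedup _)

lemma orderSummary_mem {L : Type*} [DecidableEq L] (U : Set L) (h : List L)
    {x : L} (hx : x ∈ orderSummary U h) : x ∈ U := by
  unfold orderSummary at hx
  rw [List.mem_reverse, List.mem_dedup, List.mem_reverse] at hx
  simpa using (List.of_mem_filter hx)

lemma orderSummary_self {L : Type*} [DecidableEq L] (U : Set L) (t : List L)
    (hnd : t.Nodup) (hmem : ∀ x ∈ t, x ∈ U) :
    orderSummary U t = t := by
  unfold orderSummary
  rw [List.filter_eq_self.mpr (fun x hx => by simpa using hmem x hx),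
    List.Nodup.dedup (List.nodup_reverse.mpr hnd), List.reverse_reverse]

lemma orderSummary_of_filter_eq {L : Type*} [DecidableEq L] (U : Set L)
    (h h' : List L)
    (hf : h.filter (fun x => decide (x ∈ U)) = h'.filter (fun x => decide (x ∈ U))) :
    orderSummary U h = orderSummary U h' := by
  unfold orderSummary
  rw [hf]

lemma inter_influencing {L : Type*} [Fintype L] [DecidableEq L]
    (θ : List L → L → ℝ) (X U U' : Set L)
    (hU : OrderInfluencing θ X U) (hU' : OrderInfluencing θ X U') :
    OrderInfluencing θ X (U ∩ U') := by
  -- key claim: thetaSum θ X h = thetaSum θ X (orderSummary (U ∩ U') h)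
  have key : ∀ h : List L, thetaSum θ X h = thetaSum θ X (orderSummary (U ∩ U') h) := by
    intro h
    set t := orderSummary U h with ht
    set m := t.filter (fun x => decide (x ∈ U')) with hm
    have step1 : thetaSum θ X h = thetaSum θ X t :=
      hU h t (by rw [orderSummary_self U t (orderSummary_nodup U h)
        (fun x hx => orderSummary_mem U h hx)])
    have step2 : thetaSum θ X t = thetaSum θ X m := by
      refine hU' t m (orderSummary_of_filter_eq U' t m ?_)
      rw [hm, List.filter_filter]
      exact (List.filter_congr (fun x hx => by simp)).symm
    have step3 : m = orderSummary (U ∩ U') h := by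
      have hmw : m = t.filter (fun x => decide (x ∈ U ∩ U')) := by
        rw [hm]
        refine List.filter_congr (fun x hx => ?_)
        have := orderSummary_mem U h hx
        simp [this]
      have hff : (h.filter (fun x => decide (x ∈ U))).filter
          (fun x => decide (x ∈ U ∩ U')) = h.filter (fun x => decide (x ∈ U ∩ U')) := by
        rw [List.filter_filter]
        refine List.filter_congr (fun x _ => ?_)
        by_cases h1 : x ∈ U <;> by_cases h2 : x ∈ U' <;> simp [h1, h2, Set.mem_inter_iff]
      rw [hmw, ht]
      unfold orderSummary
      rw [List.filter_reverse, filter_dedup', List.filter_reverse, hff]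
      congr!
    rw [step1, step2, step3]
  intro h h' hs
  rw [key h, key h', hs]

theorem minimal_order_influencing_unique {L : Type*} [Fintype L] [DecidableEq L]
    (θ : List L → L → ℝ)
    (hnn : ∀ (h : List L) (x : L), 0 ≤ θ h x)
    (hsum : ∀ h : List L, ∑ x, θ h x = 1)
    (X U U' : Set L)
    (hU : OrderInfluencing θ X U)
    (hUmin : ∀ V ⊂ U, ¬ OrderInfluencing θ X V)
    (hU' : OrderInfluencing θ X U')
    (hU'min : ∀ V ⊂ U', ¬ OrderInfluencing θ X V) :
    U = U' := by
  have hI := inter_influencing θ X U U' hU hU'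
  have h1 : U ∩ U' = U := by
    by_contra hne
    exact hUmin (U ∩ U') (lt_of_le_of_ne Set.inter_subset_left hne) hI
  have h2 : U ∩ U' = U' := by
    by_contra hne
    exact hU'min (U ∩ U') (lt_of_le_of_ne Set.inter_subset_right hne) hI
  rw [← h1, h2]
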